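/- arXiv:2603.01483 — 2 statements merged into one kernel-verified Lean document; each statement's English description precedes it below -/
import Mathlib

section
/- For (x₁, x₂, x₃) ∈ ℂ³, the point (x₁, x₂, x₃, 0) belongs to 𝔽 if and only if (0, x₁, x₂, x₃) ∈ ℍ, which in turn holds if and only if (x₁, x₂, x₃) ∈ 𝔼. -/
/-- The operator norm of a 2×2 complex matrix, acting on the Euclidean space ℂ². -/
noncomputable def opNorm (A : Matrix (Fin 2) (Fin 2) ℂ) : ℝ :=
  ‖LinearMap.toContinuousLinearMap (Matrix.toEuclideanLin A)‖

/-- The domain 𝔽 = {(a₁₁, a₂₂, det A, a₁₂ + a₂₁) : A ∈ M₂(ℂ), ‖A‖ < 1}. -/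
noncomputable def domF : Set (ℂ × ℂ × ℂ × ℂ) :=
  {w | ∃ A : Matrix (Fin 2) (Fin 2) ℂ, opNorm A < 1 ∧
    w = (A 0 0, A 1 1, A.det, A 0 1 + A 1 0)}

/-- The tetrablock 𝔼. -/
def tetraE : Set (ℂ × ℂ × ℂ) :=
  {x | ∀ z1 z2 : ℂ, ‖z1‖ ≤ 1 → ‖z2‖ ≤ 1 →
    1 - x.1 * z1 - x.2.1 * z2 + x.2.2 * z1 * z2 ≠ 0}

/-- The hexablock ℍ. -/
noncomputable def hexaH : Set (ℂ × ℂ × ℂ × ℂ) :=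
  {w | (w.2.1, w.2.2.1, w.2.2.2) ∈ tetraE ∧
    sSup {r : ℝ | ∃ z1 z2 : ℂ, ‖z1‖ < 1 ∧ ‖z2‖ < 1 ∧
      r = ‖(w.1 * (Real.sqrt ((1 - ‖z1‖ ^ 2) * (1 - ‖z2‖ ^ 2)) : ℂ) /
        (1 - w.2.1 * z1 - w.2.2.1 * z2 + w.2.2.2 * z1 * z2))‖} < 1}

/-!
If `‖A‖ < 1` then `‖A · diag(z₁, z₂)‖ < 1` for `|z₁|, |z₂| ≤ 1`, so
`det (1 - A · diag(z₁, z₂)) = 1 - a₁₁ z₁ - a₂₂ z₂ + det A · z₁ z₂` does not vanish: this gives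
`𝔽 ⊆ 𝔼` in the first three coordinates. Conversely, for `x ∈ 𝔼` take `A = [[x₁, p], [-p, x₂]]`
with `p² = x₃ - x₁ x₂`, so that `det A = x₃`. A `2 × 2` matrix is a strict contraction as soon as
`det (1 - Aᴴ A) = 1 - ‖A‖_F² + |det A|² > 0` and `|det A| < 1`; for this `A` these conditions read
`|x₁|² + |x₂|² + 2 |x₃ - x₁ x₂| < 1 + |x₃|²` and `|x₃| < 1`. Both follow from the one-variable
inequalities `|x₁ - x₃ z| < |1 - x₂ z|` (`|z| ≤ 1`), obtained from the definition of `𝔼` by solving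
for `z₁`, and their mirror images under `x₁ ↔ x₂`.
Finally, with first coordinate `0` the supremum in the definition of `ℍ` is `0`.
-/

open Matrix
open scoped Matrix.Norms.L2Operator ComplexConjugate

theorem opNorm_eq_l2_opNorm (A : Matrix (Fin 2) (Fin 2) ℂ) : opNorm A = ‖A‖ := rfl

theorem exists_lt_one_quadratic_le {α β γ : ℝ} (hα : α < 1) (hβ : β < 1)
    (hγ : γ ^ 2 < (1 - α) * (1 - β)) :
    ∃ c < 1, ∀ s t : ℝ, α * s ^ 2 + β * t ^ 2 + 2 * γ * s * t ≤ c * (s ^ 2 + t ^ 2) := by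
  -- `c = 1 - δ` with `(c - α) (c - β) = (1 - α) (1 - β) - δ (2 - α - β) + δ² ≥ γ²`
  set δ := ((1 - α) * (1 - β) - γ ^ 2) / (2 - α - β)
  have hδ : 0 < δ := div_pos (by linarith) (by linarith)
  have hδα : δ * (2 - α - β) = (1 - α) * (1 - β) - γ ^ 2 :=
    div_mul_cancel₀ _ (by linarith)
  have hcα : 0 < 1 - δ - α := by nlinarith
  refine ⟨1 - δ, by linarith, fun s t => ?_⟩
  have hdisc : γ ^ 2 ≤ (1 - δ - α) * (1 - δ - β) := by nlinarith
  have : 0 ≤ (1 - δ - α) * ((1 - δ - α) * s ^ 2 + (1 - δ - β) * t ^ 2 - 2 * γ * s * t) := by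
    nlinarith [sq_nonneg ((1 - δ - α) * s - γ * t), sq_nonneg t]
  nlinarith [(mul_nonneg_iff_of_pos_left hcα).mp this]

namespace Matrix

theorem norm_sq_mulVec_fin_two_le (A : Matrix (Fin 2) (Fin 2) ℂ) (v : Fin 2 → ℂ) :
    ‖(A *ᵥ v) 0‖ ^ 2 + ‖(A *ᵥ v) 1‖ ^ 2 ≤
      (‖A 0 0‖ ^ 2 + ‖A 1 0‖ ^ 2) * ‖v 0‖ ^ 2 + (‖A 0 1‖ ^ 2 + ‖A 1 1‖ ^ 2) * ‖v 1‖ ^ 2 +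
        2 * ‖conj (A 0 0) * A 0 1 + conj (A 1 0) * A 1 1‖ * ‖v 0‖ * ‖v 1‖ := by
  set m := conj (A 0 0) * A 0 1 + conj (A 1 0) * A 1 1
  have hexpand : ‖(A *ᵥ v) 0‖ ^ 2 + ‖(A *ᵥ v) 1‖ ^ 2 =
      (‖A 0 0‖ ^ 2 + ‖A 1 0‖ ^ 2) * ‖v 0‖ ^ 2 + (‖A 0 1‖ ^ 2 + ‖A 1 1‖ ^ 2) * ‖v 1‖ ^ 2 +
        2 * (conj (v 0) * m * v 1).re := by
    simp only [Complex.sq_norm, mulVec, dotProduct, Fin.sum_univ_two, m,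
      Complex.normSq_apply, Complex.mul_re, Complex.mul_im, Complex.conj_re, Complex.conj_im,
      Complex.add_re, Complex.add_im]
    ring
  have hcross : (conj (v 0) * m * v 1).re ≤ ‖m‖ * ‖v 0‖ * ‖v 1‖ := by
    refine (Complex.re_le_norm _).trans (le_of_eq ?_)
    rw [norm_mul, norm_mul, Complex.norm_conj]
    ring
  linarith

theorem l2_opNorm_lt_one_of_fin_two (A : Matrix (Fin 2) (Fin 2) ℂ)
    (hfrob : ‖A 0 0‖ ^ 2 + ‖A 0 1‖ ^ 2 + ‖A 1 0‖ ^ 2 + ‖A 1 1‖ ^ 2 < 1 + ‖A.det‖ ^ 2)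
    (hdet : ‖A.det‖ < 1) : ‖A‖ < 1 := by
  -- `α`, `β`, `m` are the entries of `Aᴴ * A`
  set α := ‖A 0 0‖ ^ 2 + ‖A 1 0‖ ^ 2
  set β := ‖A 0 1‖ ^ 2 + ‖A 1 1‖ ^ 2
  set m := conj (A 0 0) * A 0 1 + conj (A 1 0) * A 1 1
  have hgram : α * β - ‖m‖ ^ 2 = ‖A.det‖ ^ 2 := by
    simp only [α, β, m, det_fin_two, Complex.sq_norm, Complex.normSq_apply,
      Complex.mul_re, Complex.mul_im, Complex.conj_re, Complex.conj_im, Complex.add_re,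
      Complex.add_im, Complex.sub_re, Complex.sub_im]
    ring
  have hα0 : 0 ≤ α := by positivity
  have hd : ‖A.det‖ ^ 2 < 1 := by nlinarith [norm_nonneg A.det]
  have hα : α < 1 := by nlinarith [sq_nonneg ‖m‖]
  have hβ : β < 1 := by nlinarith [sq_nonneg ‖m‖]
  obtain ⟨c, hc1, hc⟩ := exists_lt_one_quadratic_le hα hβ (γ := ‖m‖) (by nlinarith)
  have hc0 : 0 ≤ c := by nlinarith [hc 1 0]
  calc ‖A‖ ≤ √c := by
        rw [cstar_norm_def]
        refine ContinuousLinearMap.opNorm_le_bound _ (Real.sqrt_nonneg c) fun x => ?_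
        rw [← pow_le_pow_iff_left₀ (norm_nonneg _) (by positivity) two_ne_zero, mul_pow,
          Real.sq_sqrt hc0, EuclideanSpace.norm_sq_eq, EuclideanSpace.norm_sq_eq,
          Fin.sum_univ_two, Fin.sum_univ_two]
        exact (A.norm_sq_mulVec_fin_two_le x).trans (hc _ _)
    _ < 1 := (Real.sqrt_lt' one_pos).mpr (by simpa using hc1)

theorem det_one_sub_ne_zero_of_norm_lt_one {n : Type*} [Fintype n] [DecidableEq n]
    {T : Matrix n n ℂ} (hT : ‖T‖ < 1) : (1 - T).det ≠ 0 :=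
  ((isUnit_iff_isUnit_det _).mp (isUnit_one_sub_of_norm_lt_one hT)).ne_zero

theorem det_one_sub_mul_diagonal_fin_two (A : Matrix (Fin 2) (Fin 2) ℂ) (z₁ z₂ : ℂ) :
    (1 - A * diagonal ![z₁, z₂]).det = 1 - A 0 0 * z₁ - A 1 1 * z₂ + A.det * z₁ * z₂ := by
  simp only [det_fin_two, Matrix.sub_apply, one_apply, mul_diagonal, Fin.isValue, ↓reduceIte,
    cons_val_zero, cons_val_one, cons_val_fin_one, zero_ne_one, one_ne_zero]
  ring

end Matrix

theorem norm_lt_norm_of_sub_mul_ne_zero {a b : ℂ} (h : ∀ z : ℂ, ‖z‖ ≤ 1 → a - b * z ≠ 0) :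
    ‖b‖ < ‖a‖ := by
  by_contra! hab
  rcases eq_or_ne b 0 with rfl | hb
  · exact h 0 (by simp) (by simpa using hab)
  · exact h (a / b) (by rw [norm_div]; exact div_le_one_of_le₀ hab (norm_nonneg b))
      (by field_simp; ring)

theorem norm_lt_of_forall_re_mul_lt {w : ℂ} {K : ℝ} (h : ∀ z : ℂ, ‖z‖ = 1 → (w * z).re < K) :
    ‖w‖ < K := by
  rcases eq_or_ne w 0 with rfl | hw
  · simpa using h 1 (by simp)
  · have hz : ‖conj w / ‖w‖‖ = 1 := by simp [hw]
    convert h _ hz using 1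
    rw [mul_div_assoc', Complex.mul_conj, Complex.normSq_eq_norm_sq]
    simp [pow_two, hw]

theorem norm_sub_conj_mul_sq (x₁ x₂ x₃ : ℂ) :
    ‖x₂ - conj x₁ * x₃‖ ^ 2 = ‖x₃ - x₁ * x₂‖ ^ 2 + (1 - ‖x₁‖ ^ 2) * (‖x₂‖ ^ 2 - ‖x₃‖ ^ 2) := by
  simp only [Complex.sq_norm, Complex.normSq_apply, Complex.mul_re, Complex.mul_im,
    Complex.sub_re, Complex.sub_im, Complex.conj_re, Complex.conj_im]
  ring

section Tetrablock

variable {x₁ x₂ x₃ : ℂ}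

theorem mem_tetraE_swap (h : (x₁, x₂, x₃) ∈ tetraE) : (x₂, x₁, x₃) ∈ tetraE :=
  fun z₁ z₂ hz₁ hz₂ heq => h z₂ z₁ hz₂ hz₁ (by linear_combination heq)

theorem norm_fst_lt_one_of_mem_tetraE (h : (x₁, x₂, x₃) ∈ tetraE) : ‖x₁‖ < 1 := by
  simpa using norm_lt_norm_of_sub_mul_ne_zero (a := 1) (b := x₁)
    fun z hz heq => h z 0 hz (by simp) (by linear_combination heq)

theorem two_mul_norm_sub_lt_of_mem_tetraE (h : (x₁, x₂, x₃) ∈ tetraE) :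
    2 * ‖x₂ - conj x₁ * x₃‖ < 1 + ‖x₂‖ ^ 2 - ‖x₁‖ ^ 2 - ‖x₃‖ ^ 2 := by
  rw [← Complex.norm_two, ← norm_mul]
  refine norm_lt_of_forall_re_mul_lt fun z hz => ?_
  have hlt : ‖x₁ - x₃ * z‖ < ‖1 - x₂ * z‖ := norm_lt_norm_of_sub_mul_ne_zero
    fun z₁ hz₁ heq => h z₁ z hz₁ hz.le (by linear_combination heq)
  have hsq := pow_lt_pow_left₀ hlt (norm_nonneg _) two_ne_zero
  have hz' : z.re * z.re + z.im * z.im = 1 := by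
    rw [← Complex.normSq_apply, Complex.normSq_eq_norm_sq, hz, one_pow]
  simp only [Complex.sq_norm, Complex.normSq_apply, Complex.mul_re, Complex.mul_im,
    Complex.sub_re, Complex.sub_im, Complex.conj_re, Complex.conj_im, Complex.one_re,
    Complex.one_im, Complex.re_ofNat, Complex.im_ofNat] at hsq ⊢
  linear_combination hsq +
    ((x₂.re * x₂.re + x₂.im * x₂.im) - (x₃.re * x₃.re + x₃.im * x₃.im)) * hz'

theorem norm_thd_lt_one_of_mem_tetraE (h : (x₁, x₂, x₃) ∈ tetraE) : ‖x₃‖ < 1 := by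
  have h₁ := two_mul_norm_sub_lt_of_mem_tetraE h
  have h₂ := two_mul_norm_sub_lt_of_mem_tetraE (mem_tetraE_swap h)
  nlinarith [norm_nonneg (x₂ - conj x₁ * x₃), norm_nonneg (x₁ - conj x₂ * x₃), norm_nonneg x₃]

theorem norm_sq_add_norm_sq_add_two_mul_lt_of_mem_tetraE (h : (x₁, x₂, x₃) ∈ tetraE) :
    ‖x₁‖ ^ 2 + ‖x₂‖ ^ 2 + 2 * ‖x₃ - x₁ * x₂‖ < 1 + ‖x₃‖ ^ 2 := by
  have hD := two_mul_norm_sub_lt_of_mem_tetraE h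
  have hDsq := norm_sub_conj_mul_sq x₁ x₂ x₃
  have hDlow : ‖x₂‖ - ‖x₁‖ * ‖x₃‖ ≤ ‖x₂ - conj x₁ * x₃‖ := by
    simpa using norm_sub_norm_le x₂ (conj x₁ * x₃)
  have hu := norm_fst_lt_one_of_mem_tetraE h
  have hv := norm_fst_lt_one_of_mem_tetraE (mem_tetraE_swap h)
  set u := ‖x₁‖
  set v := ‖x₂‖
  set w := ‖x₃‖
  set q := ‖x₃ - x₁ * x₂‖
  set D := ‖x₂ - conj x₁ * x₃‖
  have hu0 : 0 ≤ u := norm_nonneg _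
  have hv0 : 0 ≤ v := norm_nonneg _
  have hw0 : 0 ≤ w := norm_nonneg _
  have hq0 : 0 ≤ q := norm_nonneg _
  have hD0 : 0 ≤ D := norm_nonneg _
  -- `hD` and `hDlow` give `(u - w)² < (1 - v)²`
  have hw : u + v - 1 < w := by nlinarith
  have hpos : 0 < 1 - u ^ 2 - v ^ 2 + w ^ 2 := by
    rcases le_or_gt (u + v) 1 with huv | huv
    · nlinarith
    · nlinarith
  -- squaring `hD` and substituting `hDsq` leaves `(2q)² < (1 - u² - v² + w²)²`
  have hsq : (2 * q) ^ 2 < (1 - u ^ 2 - v ^ 2 + w ^ 2) ^ 2 := by nlinarith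
  nlinarith [abs_lt_of_sq_lt_sq' hsq hpos.le]

theorem mem_tetraE_of_l2_opNorm_lt_one {A : Matrix (Fin 2) (Fin 2) ℂ} (hA : ‖A‖ < 1) :
    (A 0 0, A 1 1, A.det) ∈ tetraE := by
  intro z₁ z₂ hz₁ hz₂
  rw [← det_one_sub_mul_diagonal_fin_two]
  refine det_one_sub_ne_zero_of_norm_lt_one ?_
  have hD : ‖(diagonal ![z₁, z₂] : Matrix (Fin 2) (Fin 2) ℂ)‖ ≤ 1 := by
    rw [l2_opNorm_diagonal, pi_norm_le_iff_of_nonneg zero_le_one, Fin.forall_fin_two]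
    exact ⟨hz₁, hz₂⟩
  calc ‖A * diagonal ![z₁, z₂]‖ ≤ ‖A‖ * ‖(diagonal ![z₁, z₂] : Matrix (Fin 2) (Fin 2) ℂ)‖ :=
        l2_opNorm_mul _ _
    _ ≤ ‖A‖ * 1 := by gcongr
    _ < 1 := by rwa [mul_one]

theorem mem_tetraE_of_mem_domF {s : ℂ} (h : (x₁, x₂, x₃, s) ∈ domF) : (x₁, x₂, x₃) ∈ tetraE := by
  obtain ⟨A, hA, heq⟩ := h
  simp only [Prod.mk.injEq] at heq
  obtain ⟨rfl, rfl, rfl, -⟩ := heq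
  rw [opNorm_eq_l2_opNorm] at hA
  exact mem_tetraE_of_l2_opNorm_lt_one hA

theorem mem_domF_of_mem_tetraE (h : (x₁, x₂, x₃) ∈ tetraE) : (x₁, x₂, x₃, 0) ∈ domF := by
  obtain ⟨p, hp⟩ : ∃ p : ℂ, p ^ 2 = x₃ - x₁ * x₂ := IsAlgClosed.exists_pow_nat_eq _ two_pos
  have hdet : (!![x₁, p; -p, x₂]).det = x₃ := by
    rw [det_fin_two_of]
    linear_combination hp
  have hp' : ‖p‖ ^ 2 = ‖x₃ - x₁ * x₂‖ := by rw [← norm_pow, hp]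
  refine ⟨!![x₁, p; -p, x₂], l2_opNorm_lt_one_of_fin_two _ ?_ ?_, ?_⟩
  · simp only [of_apply, cons_val', cons_val_zero, cons_val_one, empty_val', cons_val_fin_one,
      norm_neg, hdet]
    linarith [norm_sq_add_norm_sq_add_two_mul_lt_of_mem_tetraE h]
  · rw [hdet]
    exact norm_thd_lt_one_of_mem_tetraE h
  · simp [hdet]

theorem mk_zero_mem_hexaH_iff : ((0 : ℂ), x₁, x₂, x₃) ∈ hexaH ↔ (x₁, x₂, x₃) ∈ tetraE := by
  simp [hexaH, show ∃ z : ℂ, ‖z‖ < 1 from ⟨0, by simp⟩]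

end Tetrablock

/-- Proposition 2.7: (x₁, x₂, x₃, 0) ∈ 𝔽 iff (0, x₁, x₂, x₃) ∈ ℍ, which holds iff
(x₁, x₂, x₃) ∈ 𝔼. -/
theorem stmt6 (x1 x2 x3 : ℂ) :
    ((x1, x2, x3, (0 : ℂ)) ∈ domF ↔ ((0 : ℂ), x1, x2, x3) ∈ hexaH) ∧
    (((0 : ℂ), x1, x2, x3) ∈ hexaH ↔ (x1, x2, x3) ∈ tetraE) := by
  have hF : (x1, x2, x3, (0 : ℂ)) ∈ domF ↔ (x1, x2, x3) ∈ tetraE :=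
    ⟨mem_tetraE_of_mem_domF, mem_domF_of_mem_tetraE⟩
  exact ⟨hF.trans mk_zero_mem_hexaH_iff.symm, mk_zero_mem_hexaH_iff⟩
end

section
/- Let E ⊆ M₂(ℂ) be a linear subspace. The following are equivalent: (1) 𝔽 = 𝔽_{μ_E}; (2) μ_E(A) = ‖A‖ for all A ∈ M₂(ℂ); (3) for every pair of unit vectors u, v ∈ ℂ² there exists A ∈ E with ‖A‖ = 1 such that Au = v. -/
open scoped Classical in
/-- The structured singular value μ_E(A) relative to a structure set E ⊆ M₂(ℂ). -/
noncomputable def mu (E : Set (Matrix (Fin 2) (Fin 2) ℂ)) (A : Matrix (Fin 2) (Fin 2) ℂ) : ℝ :=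
  if ∃ X ∈ E, (1 - A * X).det = 0 then
    (sInf {r : ℝ | ∃ X ∈ E, (1 - A * X).det = 0 ∧ r = opNorm X})⁻¹
  else 0

/-- 𝔽_{μ_E} = {(a₁₁, a₂₂, det A, a₁₂ + a₂₁) : A ∈ M₂(ℂ), μ_E(A) < 1}. -/
noncomputable def Fmu (E : Set (Matrix (Fin 2) (Fin 2) ℂ)) : Set (ℂ × ℂ × ℂ × ℂ) :=
  {w | ∃ A : Matrix (Fin 2) (Fin 2) ℂ, mu E A < 1 ∧
    w = (A 0 0, A 1 1, A.det, A 0 1 + A 1 0)}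

/-!
`μ_E(A) ≤ ‖A‖` always, because `det (1 - A X) = 0` forces `‖A X‖ ≥ 1`; and `μ_E` is homogeneous.
The data `(a₁₁, a₂₂, det A, a₁₂ + a₂₁)` determine `A` up to transposition, which preserves the
norm, so a matrix of norm one with `μ_E < 1` would give a point of `𝔽_{μ_E}` outside `𝔽`: this is
`(1) ⇔ (2)`.

For `(3) ⇒ (2)`: if `X ∈ E` has norm one and sends `Ax/‖Ax‖` to `x/‖x‖`, then `‖Ax‖/‖x‖` is an
eigenvalue of `A X`, so `μ_E(A) ≥ ‖Ax‖/‖x‖`. For `(2) ⇒ (3)`: take the rank-one `A = u v*`. Since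
`E` is closed, a destabilizing `X ∈ E` of minimal norm exists, and `‖X‖ = μ_E(A)⁻¹ = 1`. A fixed
vector of `A X` is a multiple of `u`, which forces `⟪v, X u⟫ = 1`, hence `X u = v` by the
equality case of Cauchy–Schwarz.
-/

open Matrix InnerProductSpace WithLp
open scoped Matrix.Norms.L2Operator

section

variable {𝕜 m n : Type*} [RCLike 𝕜] [Fintype m] [Fintype n]

theorem EuclideanSpace.norm_toLp_star (f : n → 𝕜) :
    ‖(toLp 2 (star f) : EuclideanSpace 𝕜 n)‖ = ‖(toLp 2 f : EuclideanSpace 𝕜 n)‖ := by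
  simp [EuclideanSpace.norm_eq]

namespace Matrix

theorem l2_opNorm_map_star_le [DecidableEq n] (A : Matrix m n 𝕜) : ‖A.map star‖ ≤ ‖A‖ := by
  refine ContinuousLinearMap.opNorm_le_bound _ (norm_nonneg A) fun x => ?_
  have hmap : A.map star *ᵥ ofLp x = star (A *ᵥ star (ofLp x)) := by
    ext i; simp [mulVec, dotProduct, star_sum]
  calc ‖toLp 2 (A.map star *ᵥ ofLp x)‖ = ‖toLp 2 (A *ᵥ star (ofLp x))‖ := by
        rw [hmap, EuclideanSpace.norm_toLp_star]
    _ ≤ ‖A‖ * ‖toLp 2 (star (ofLp x))‖ := A.l2_opNorm_mulVec _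
    _ = ‖A‖ * ‖x‖ := by rw [EuclideanSpace.norm_toLp_star]

theorem l2_opNorm_map_star [DecidableEq m] [DecidableEq n] (A : Matrix m n 𝕜) :
    ‖A.map star‖ = ‖A‖ := by
  refine le_antisymm A.l2_opNorm_map_star_le ?_
  simpa [Matrix.map_map, Function.comp_def] using (A.map star).l2_opNorm_map_star_le

theorem l2_opNorm_transpose [DecidableEq m] [DecidableEq n] (A : Matrix m n 𝕜) : ‖Aᵀ‖ = ‖A‖ := by
  rw [show Aᵀ = (A.map star)ᴴ by ext; simp, l2_opNorm_conjTranspose, l2_opNorm_map_star]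

theorem det_one_sub_eq_zero_iff [DecidableEq n] {M : Matrix n n 𝕜} :
    (1 - M).det = 0 ↔ ∃ x : EuclideanSpace 𝕜 n, x ≠ 0 ∧ toEuclideanCLM (𝕜 := 𝕜) M x = x := by
  rw [← exists_mulVec_eq_zero_iff]
  constructor
  · rintro ⟨v, hv, h⟩
    refine ⟨toLp 2 v, by simpa using hv, ?_⟩
    rw [sub_mulVec, one_mulVec, sub_eq_zero] at h
    rw [toEuclideanCLM_toLp, ← h]
  · rintro ⟨x, hx, h⟩
    refine ⟨ofLp x, by simpa using hx, ?_⟩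
    rw [sub_mulVec, one_mulVec, sub_eq_zero, ← ofLp_toEuclideanCLM, h]

theorem one_le_l2_opNorm_of_det_one_sub_eq_zero [DecidableEq n] {M : Matrix n n 𝕜}
    (h : (1 - M).det = 0) : 1 ≤ ‖M‖ := by
  obtain ⟨x, hx, hMx⟩ := det_one_sub_eq_zero_iff.mp h
  have hle : ‖x‖ ≤ ‖M‖ * ‖x‖ := by
    simpa only [hMx, ← cstar_norm_def] using (toEuclideanCLM (𝕜 := 𝕜) M).le_opNorm x
  exact le_of_mul_le_mul_right (by simpa using hle) (norm_pos_iff.mpr hx)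

theorem eq_or_eq_transpose_of_fin_two {R : Type*} [CommRing R] [IsDomain R]
    {A B : Matrix (Fin 2) (Fin 2) R}
    (h : (B 0 0, B 1 1, B.det, B 0 1 + B 1 0) = (A 0 0, A 1 1, A.det, A 0 1 + A 1 0)) :
    B = A ∨ B = Aᵀ := by
  simp only [Prod.mk.injEq, det_fin_two] at h
  obtain ⟨h00, h11, hdet, hsum⟩ := h
  have hprod : (B 0 1 - A 0 1) * (B 0 1 - A 1 0) = 0 := by
    rw [h00, h11] at hdet
    linear_combination B 0 1 * hsum + hdet
  rcases mul_eq_zero.mp hprod with h01 | h01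
  · have h10 : B 1 0 = A 1 0 := by linear_combination hsum - h01
    left
    ext i j
    fin_cases i <;> fin_cases j <;> simp [h00, h11, sub_eq_zero.mp h01, h10]
  · have h10 : B 1 0 = A 0 1 := by linear_combination hsum - h01
    right
    ext i j
    fin_cases i <;> fin_cases j <;> simp [h00, h11, sub_eq_zero.mp h01, h10]

end Matrix

end

local notation "M₂" => Matrix (Fin 2) (Fin 2) ℂ

theorem opNorm_eq_norm (A : M₂) : opNorm A = ‖A‖ := rfl

def destabilizing (E : Set M₂) (A : M₂) : Set M₂ := {X | X ∈ E ∧ (1 - A * X).det = 0}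

theorem ne_zero_of_mem_destabilizing {E : Set M₂} {A X : M₂} (hX : X ∈ destabilizing E A) :
    X ≠ 0 := by
  rintro rfl
  simp [destabilizing] at hX

-- Also valid when no `X` destabilizes `A`, as then both sides are `0` (`sInf ∅ = 0`, `0⁻¹ = 0`).
theorem mu_eq_inv_sInf (E : Set M₂) (A : M₂) :
    mu E A = (sInf (norm '' destabilizing E A))⁻¹ := by
  unfold mu
  split_ifs with h
  · congr 2
    ext r
    simp [destabilizing, opNorm_eq_norm, eq_comm, and_assoc]
  · have : destabilizing E A = ∅ := by
      simpa [destabilizing, Set.eq_empty_iff_forall_notMem] using h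
    simp [this]

theorem mu_nonneg (E : Set M₂) (A : M₂) : 0 ≤ mu E A := by
  rw [mu_eq_inv_sInf]
  exact inv_nonneg.2 (Real.sInf_nonneg (by rintro _ ⟨X, -, rfl⟩; exact norm_nonneg X))

theorem mu_eq_zero_of_destabilizing_eq_empty {E : Set M₂} {A : M₂}
    (h : destabilizing E A = ∅) : mu E A = 0 := by
  simp [mu_eq_inv_sInf, h]

section Submodule

variable (E : Submodule ℂ M₂)

theorem isClosed_destabilizing (A : M₂) : IsClosed (destabilizing E A) :=
  E.closed_of_finiteDimensional.inter (isClosed_eq (by fun_prop) continuous_const)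

theorem isLeast_norm_destabilizing {A : M₂} (h : (destabilizing E A).Nonempty) :
    IsLeast (norm '' destabilizing E A) (mu E A)⁻¹ := by
  obtain ⟨X, hX, hdist⟩ := (isClosed_destabilizing E A).exists_infDist_eq_dist h 0
  have hleast : IsLeast (norm '' destabilizing E A) ‖X‖ := by
    refine ⟨Set.mem_image_of_mem _ hX, Set.forall_mem_image.2 fun Y hY => ?_⟩
    have := Metric.infDist_le_dist_of_mem hY (x := 0)
    rwa [hdist, dist_zero_left, dist_zero_left] at this
  rwa [mu_eq_inv_sInf, inv_inv, hleast.csInf_eq]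

theorem inv_norm_le_mu {A X : M₂} (hX : X ∈ destabilizing E A) : ‖X‖⁻¹ ≤ mu E A := by
  have hleast := isLeast_norm_destabilizing E ⟨X, hX⟩
  obtain ⟨X₀, hX₀, hX₀norm⟩ := hleast.1
  have hpos : 0 < mu E A :=
    inv_pos.1 (hX₀norm ▸ norm_pos_iff.2 (ne_zero_of_mem_destabilizing hX₀))
  exact inv_le_of_inv_le₀ hpos (hleast.2 (Set.mem_image_of_mem _ hX))

theorem mu_le_norm (A : M₂) : mu E A ≤ ‖A‖ := by
  rcases (destabilizing E A).eq_empty_or_nonempty with h | h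
  · rw [mu_eq_zero_of_destabilizing_eq_empty h]
    exact norm_nonneg A
  obtain ⟨X, hX, hXnorm⟩ := (isLeast_norm_destabilizing E h).1
  have hXpos : 0 < ‖X‖ := norm_pos_iff.2 (ne_zero_of_mem_destabilizing hX)
  rw [← inv_inv (mu E A), ← hXnorm, inv_le_iff_one_le_mul₀ hXpos]
  exact (one_le_l2_opNorm_of_det_one_sub_eq_zero hX.2).trans (l2_opNorm_mul A X)

theorem norm_mul_mu_le_mu_smul (c : ℂ) (A : M₂) : ‖c‖ * mu E A ≤ mu E (c • A) := by
  rcases (destabilizing E A).eq_empty_or_nonempty with h | h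
  · rw [mu_eq_zero_of_destabilizing_eq_empty h, mul_zero]
    exact mu_nonneg _ _
  rcases eq_or_ne c 0 with rfl | hc
  · rw [norm_zero, zero_mul]
    exact mu_nonneg _ _
  obtain ⟨X, hX, hXnorm⟩ := (isLeast_norm_destabilizing E h).1
  have hcX : c⁻¹ • X ∈ destabilizing E (c • A) := by
    refine ⟨E.smul_mem _ hX.1, ?_⟩
    rw [smul_mul_smul_comm, mul_inv_cancel₀ hc, one_smul]
    exact hX.2
  calc ‖c‖ * mu E A = ‖c⁻¹ • X‖⁻¹ := by
        rw [norm_smul, hXnorm, norm_inv, mul_inv, inv_inv, inv_inv]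
    _ ≤ mu E (c • A) := inv_norm_le_mu E hcX

theorem mu_smul (c : ℂ) (A : M₂) : mu E (c • A) = ‖c‖ * mu E A := by
  rcases eq_or_ne c 0 with rfl | hc
  · simpa using le_antisymm (by simpa using mu_le_norm E 0) (mu_nonneg E 0)
  refine le_antisymm ?_ (norm_mul_mu_le_mu_smul E c A)
  have := norm_mul_mu_le_mu_smul E c⁻¹ (c • A)
  rwa [smul_smul, inv_mul_cancel₀ hc, one_smul, norm_inv, inv_mul_le_iff₀ (norm_pos_iff.2 hc)] at this

theorem norm_div_norm_le_mu {A X : M₂} (hX : X ∈ E) {w : EuclideanSpace ℂ (Fin 2)} (hw : w ≠ 0)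
    {c : ℂ} (h : toEuclideanCLM (𝕜 := ℂ) (A * X) w = c • w) : ‖c‖ / ‖X‖ ≤ mu E A := by
  rcases eq_or_ne c 0 with rfl | hc
  · simpa using mu_nonneg E A
  have hmem : c⁻¹ • X ∈ destabilizing E A := by
    refine ⟨E.smul_mem _ hX, det_one_sub_eq_zero_iff.2 ⟨w, hw, ?_⟩⟩
    rw [mul_smul_comm, map_smul, _root_.smul_apply, h, smul_smul,
      inv_mul_cancel₀ hc, one_smul]
  simpa [norm_smul, div_eq_mul_inv, mul_comm] using inv_norm_le_mu E hmem


theorem norm_lt_one_of_mem_domF {A : M₂} (h : (A 0 0, A 1 1, A.det, A 0 1 + A 1 0) ∈ domF) :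
    ‖A‖ < 1 := by
  obtain ⟨B, hB, hBA⟩ := h
  rcases eq_or_eq_transpose_of_fin_two hBA.symm with rfl | rfl
  · exact hB
  · rwa [opNorm_eq_norm, l2_opNorm_transpose] at hB

theorem mu_eq_norm_of_domF_eq_Fmu (h : domF = Fmu E) (A : M₂) : mu E A = opNorm A := by
  refine le_antisymm (mu_le_norm E A) (not_lt.1 fun hlt => ?_)
  have hA : 0 < ‖A‖ := (mu_nonneg E A).trans_lt hlt
  set B : M₂ := ((‖A‖⁻¹ : ℝ) : ℂ) • A
  have hB : ‖B‖ = 1 := by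
    rw [norm_smul, Complex.norm_real, Real.norm_of_nonneg (by positivity), inv_mul_cancel₀ hA.ne']
  have hmuB : mu E B < 1 := by
    rw [mu_smul, Complex.norm_real, Real.norm_of_nonneg (by positivity), inv_mul_lt_iff₀ hA,
      mul_one]
    exact hlt
  have hmem : (B 0 0, B 1 1, B.det, B 0 1 + B 1 0) ∈ domF := h ▸ ⟨B, hmuB, rfl⟩
  exact (norm_lt_one_of_mem_domF hmem).ne hB

theorem inner_apply_eq_one_of_det_one_sub_mul_eq_zero {A X : M₂} {u v : EuclideanSpace ℂ (Fin 2)}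
    (hA : ∀ y, toEuclideanCLM (𝕜 := ℂ) A y = inner ℂ v y • u) (h : (1 - A * X).det = 0) :
    inner ℂ v (toEuclideanCLM (𝕜 := ℂ) X u) = 1 := by
  obtain ⟨w, hw, hfix⟩ := det_one_sub_eq_zero_iff.1 h
  rw [map_mul, mul_apply_eq_comp, hA] at hfix
  set c := inner ℂ v (toEuclideanCLM (𝕜 := ℂ) X w) with hc_def
  have hc : c ≠ 0 := by
    rintro hc
    rw [hc, zero_smul] at hfix
    exact hw hfix.symm
  refine mul_left_cancel₀ hc ?_
  calc c * inner ℂ v (toEuclideanCLM (𝕜 := ℂ) X u) = c := by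
        conv_rhs => rw [hc_def, ← hfix, map_smul, inner_smul_right]
    _ = c * 1 := (mul_one c).symm

theorem exists_mem_apply_eq_of_mu_eq_norm (h : ∀ A, mu E A = opNorm A)
    {u v : EuclideanSpace ℂ (Fin 2)} (hu : ‖u‖ = 1) (hv : ‖v‖ = 1) :
    ∃ X ∈ E, opNorm X = 1 ∧ toEuclideanLin X u = v := by
  set A : M₂ := (toEuclideanCLM (n := Fin 2) (𝕜 := ℂ)).symm (rankOne ℂ u v)
  have hA : ∀ y, toEuclideanCLM (𝕜 := ℂ) A y = inner ℂ v y • u := by simp [A]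
  have hmu : mu E A = 1 := by
    rw [h, opNorm_eq_norm, cstar_norm_def]
    simp [A, hu, hv]
  have hne : (destabilizing E A).Nonempty := by
    refine Set.nonempty_iff_ne_empty.2 fun hempty => ?_
    simp [mu_eq_zero_of_destabilizing_eq_empty hempty] at hmu
  obtain ⟨X, hX, hXnorm⟩ := (isLeast_norm_destabilizing E hne).1
  rw [hmu, inv_one] at hXnorm
  have hinner := inner_apply_eq_one_of_det_one_sub_mul_eq_zero hA hX.2
  have hle : ‖toEuclideanCLM (𝕜 := ℂ) X u‖ ≤ 1 := by
    simpa [hu, hXnorm, ← cstar_norm_def] using (toEuclideanCLM (𝕜 := ℂ) X).le_opNorm u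
  have hnorm : ‖toEuclideanCLM (𝕜 := ℂ) X u‖ = 1 := by
    refine le_antisymm hle ?_
    simpa [hinner, hv] using norm_inner_le_norm (𝕜 := ℂ) v (toEuclideanCLM (𝕜 := ℂ) X u)
  exact ⟨X, hX.1, hXnorm, ((inner_eq_one_iff_of_norm_eq_one hv hnorm).1 hinner).symm⟩

theorem norm_le_mu_of_forall_exists_mem_apply_eq
    (h : ∀ u v : EuclideanSpace ℂ (Fin 2), ‖u‖ = 1 → ‖v‖ = 1 →
      ∃ A ∈ E, opNorm A = 1 ∧ toEuclideanLin A u = v) (A : M₂) :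
    ‖A‖ ≤ mu E A := by
  rw [cstar_norm_def]
  refine ContinuousLinearMap.opNorm_le_bound _ (mu_nonneg E A) fun x => ?_
  set y := toEuclideanCLM (𝕜 := ℂ) A x
  rcases eq_or_ne y 0 with hy | hy
  · rw [hy, norm_zero]
    exact mul_nonneg (mu_nonneg E A) (norm_nonneg x)
  have hx : x ≠ 0 := by
    rintro rfl
    exact hy (map_zero _)
  set u : EuclideanSpace ℂ (Fin 2) := (‖y‖⁻¹ : ℂ) • y
  obtain ⟨X, hXE, hXnorm, hXu⟩ :=
    h u ((‖x‖⁻¹ : ℂ) • x) (norm_smul_inv_norm hy) (norm_smul_inv_norm hx)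
  have heig : toEuclideanCLM (𝕜 := ℂ) (A * X) u = (‖y‖ / ‖x‖ : ℂ) • u := by
    rw [map_mul, mul_apply_eq_comp, show toEuclideanCLM (𝕜 := ℂ) X u = _ from hXu, map_smul, smul_smul]
    congr 1
    field_simp [norm_ne_zero_iff.2 hy]
  have := norm_div_norm_le_mu E hXE (by simpa [u] using hy) heig
  rwa [← opNorm_eq_norm, hXnorm, div_one, norm_div, Complex.norm_real, Complex.norm_real,
    norm_norm, norm_norm, div_le_iff₀ (norm_pos_iff.2 hx)] at this

end Submodule

/-- Theorem 4.1: for a linear subspace E ⊆ M₂(ℂ), the following are equivalent: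
(1) 𝔽 = 𝔽_{μ_E}; (2) μ_E(A) = ‖A‖ for all A; (3) for all unit vectors u, v ∈ ℂ² there is
A ∈ E with ‖A‖ = 1 and Au = v. -/
theorem stmt17 (E : Submodule ℂ (Matrix (Fin 2) (Fin 2) ℂ)) :
    ((domF = Fmu (E : Set (Matrix (Fin 2) (Fin 2) ℂ))) ↔
      (∀ A : Matrix (Fin 2) (Fin 2) ℂ, mu (E : Set (Matrix (Fin 2) (Fin 2) ℂ)) A = opNorm A)) ∧
    ((∀ A : Matrix (Fin 2) (Fin 2) ℂ, mu (E : Set (Matrix (Fin 2) (Fin 2) ℂ)) A = opNorm A) ↔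
      (∀ u v : EuclideanSpace ℂ (Fin 2), ‖u‖ = 1 → ‖v‖ = 1 →
        ∃ A ∈ E, opNorm A = 1 ∧ Matrix.toEuclideanLin A u = v)) := by
  refine ⟨⟨mu_eq_norm_of_domF_eq_Fmu E, fun h => ?_⟩,
    ⟨fun h u v hu hv => exists_mem_apply_eq_of_mu_eq_norm E h hu hv, fun h A => ?_⟩⟩
  · simp only [domF, Fmu, h]
  · exact le_antisymm (mu_le_norm E A) (norm_le_mu_of_forall_exists_mem_apply_eq E h A)
end
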